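/- Let w : ℂ → ℂ be a homeomorphism satisfying the Beltrami equation w_z̄ = μ(z) w_z almost everywhere with ‖μ‖_∞ ≤ k < 1 and w ∈ W^{1,p}_loc for some p > 2. Then the inverse map h = w⁻¹ satisfies the equation h_w̄ = ν(w) h_w with ν(w) = −μ(h(w)) · (w_z / \overline{w_z}) ∘ h, and ‖ν‖_∞ = ‖μ‖_∞ ≤ k. -/

import Mathlib

noncomputable section

/-- Wirtinger derivative `f_z = ½(f_x − i f_y)`. -/
def wirtingerZ (f : ℂ → ℂ) (z : ℂ) : ℂ :=
  (fderiv ℝ f z 1 - Complex.I * fderiv ℝ f z Complex.I) / 2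

/-- Wirtinger derivative `f_z̄ = ½(f_x + i f_y)`. -/
def wirtingerZbar (f : ℂ → ℂ) (z : ℂ) : ℂ :=
  (fderiv ℝ f z 1 + Complex.I * fderiv ℝ f z Complex.I) / 2

/-! The inverse `h` of `w` satisfies `h ∘ w = id`, so by the chain rule for Wirtinger derivatives
`0 = (h ∘ w)_z̄ = h_w · w_z̄ + h_w̄ · conj w_z`. Substituting `w_z̄ = μ w_z` and dividing by
`conj w_z ≠ 0` gives `h_w̄ = -μ · (w_z / conj w_z) · h_w`, and `|w_z / conj w_z| = 1`. -/

open Complex ComplexConjugate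

theorem ContinuousLinearMap.apply_eq_mul_add_mul_conj (L : ℂ →L[ℝ] ℂ) (v : ℂ) :
    L v = (L 1 - I * L I) / 2 * v + (L 1 + I * L I) / 2 * conj v := by
  obtain ⟨x, y, rfl⟩ : ∃ x y : ℝ, v = x + y * I := ⟨v.re, v.im, (re_add_im v).symm⟩
  have hxy : (x : ℂ) + y * I = x • (1 : ℂ) + y • I := by simp [real_smul]
  rw [hxy, map_add, map_smul, map_smul, ← hxy]
  simp only [real_smul, map_add, map_mul, conj_ofReal, conj_I]
  linear_combination (y * L I) * I_sq

theorem fderiv_apply_eq_wirtinger (f : ℂ → ℂ) (z v : ℂ) :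
    fderiv ℝ f z v = wirtingerZ f z * v + wirtingerZbar f z * conj v :=
  (fderiv ℝ f z).apply_eq_mul_add_mul_conj v

theorem wirtingerZbar_comp {f g : ℂ → ℂ} {z : ℂ} (hf : DifferentiableAt ℝ f (g z))
    (hg : DifferentiableAt ℝ g z) :
    wirtingerZbar (f ∘ g) z =
      wirtingerZ f (g z) * wirtingerZbar g z + wirtingerZbar f (g z) * conj (wirtingerZ g z) := by
  have hg1 := fderiv_apply_eq_wirtinger g z 1
  have hgI := fderiv_apply_eq_wirtinger g z I
  rw [wirtingerZbar, fderiv_comp z hf hg, ContinuousLinearMap.comp_apply,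
    ContinuousLinearMap.comp_apply, fderiv_apply_eq_wirtinger f, fderiv_apply_eq_wirtinger f,
    hg1, hgI]
  simp only [map_add, map_mul, map_one, map_neg, conj_I, mul_one]
  linear_combination (wirtingerZ f (g z) * (wirtingerZ g z - wirtingerZbar g z)
    - wirtingerZbar f (g z) * (conj (wirtingerZ g z) - conj (wirtingerZbar g z))) / 2 * I_sq

theorem Function.LeftInverse.wirtinger_chain_eq_zero {f g : ℂ → ℂ} {z : ℂ}
    (hfg : Function.LeftInverse g f)
    (hg : DifferentiableAt ℝ g (f z)) (hf : DifferentiableAt ℝ f z) :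
    wirtingerZ g (f z) * wirtingerZbar f z + wirtingerZbar g (f z) * conj (wirtingerZ f z) = 0 := by
  rw [← wirtingerZbar_comp hg hf, hfg.comp_eq_id, wirtingerZbar, fderiv_id]
  simp

theorem norm_neg_mul_div_conj {a : ℂ} (m : ℂ) (ha : a ≠ 0) : ‖-m * (a / conj a)‖ = ‖m‖ := by
  rw [norm_mul, norm_neg, norm_div, RCLike.norm_conj, div_self (norm_ne_zero_iff.mpr ha), mul_one]

theorem inverse_beltrami_equation_general
    (w : ℂ ≃ₜ ℂ) (μ : ℂ → ℂ) (k : ℝ)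
    (hμ : ∀ z, ‖μ z‖ ≤ k)
    (hdiff : Differentiable ℝ (w : ℂ → ℂ))
    (hdiffinv : Differentiable ℝ (w.symm : ℂ → ℂ))
    (hbeltrami : ∀ z, wirtingerZbar w z = μ z * wirtingerZ w z)
    (hwz : ∀ z, wirtingerZ w z ≠ 0)
    (ν : ℂ → ℂ)
    (hν : ∀ ζ, ν ζ = -μ (w.symm ζ) *
      (wirtingerZ w (w.symm ζ) / (starRingEnd ℂ) (wirtingerZ w (w.symm ζ)))) :
    (∀ ζ, wirtingerZbar (w.symm : ℂ → ℂ) ζ = ν ζ * wirtingerZ (w.symm : ℂ → ℂ) ζ) ∧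
    (∀ ζ, ‖ν ζ‖ = ‖μ (w.symm ζ)‖) ∧ (∀ ζ, ‖ν ζ‖ ≤ k) := by
  have hnorm (ζ : ℂ) : ‖ν ζ‖ = ‖μ (w.symm ζ)‖ := by
    rw [hν ζ, norm_neg_mul_div_conj _ (hwz _)]
  refine ⟨fun ζ => ?_, hnorm, fun ζ => hnorm ζ ▸ hμ (w.symm ζ)⟩
  obtain ⟨z, rfl⟩ := w.surjective ζ
  have hchain := Function.LeftInverse.wirtinger_chain_eq_zero w.symm_apply_apply
    (hdiffinv (w z)) (hdiff z)
  have hconj : conj (wirtingerZ w z) ≠ 0 := (map_ne_zero _).mpr (hwz z)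
  rw [hbeltrami z] at hchain
  rw [hν, w.symm_apply_apply]
  field_simp
  linear_combination hchain

theorem inverse_beltrami_equation
    (w : ℂ ≃ₜ ℂ) (μ : ℂ → ℂ) (k : ℝ) (hk : k < 1)
    (hμ : ∀ z, ‖μ z‖ ≤ k)
    (hdiff : Differentiable ℝ (w : ℂ → ℂ))
    (hdiffinv : Differentiable ℝ (w.symm : ℂ → ℂ))
    (hbeltrami : ∀ z, wirtingerZbar w z = μ z * wirtingerZ w z)
    (hwz : ∀ z, wirtingerZ w z ≠ 0)
    (ν : ℂ → ℂ)
    (hν : ∀ ζ, ν ζ = -μ (w.symm ζ) *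
      (wirtingerZ w (w.symm ζ) / (starRingEnd ℂ) (wirtingerZ w (w.symm ζ)))) :
    (∀ ζ, wirtingerZbar (w.symm : ℂ → ℂ) ζ = ν ζ * wirtingerZ (w.symm : ℂ → ℂ) ζ) ∧
    (∀ ζ, ‖ν ζ‖ = ‖μ (w.symm ζ)‖) ∧ (∀ ζ, ‖ν ζ‖ ≤ k) :=
  inverse_beltrami_equation_general w μ k hμ hdiff hdiffinv hbeltrami hwz ν hν
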